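/- Consistency of the Pick-and-Freeze estimator: the estimator S_{u,N} converges almost surely to S^u as N → ∞. -/

import Mathlib

open MeasureTheory ProbabilityTheory Filter

/-- Covariance of two real-valued random variables. -/
noncomputable def rCov {Ω : Type*} [MeasurableSpace Ω] (μ : Measure Ω) (f g : Ω → ℝ) : ℝ :=
  ∫ ω, (f ω - ∫ x, f x ∂μ) * (g ω - ∫ x, g x ∂μ) ∂μ

/-- The Pick-and-Freeze estimator `S_{u,N}` built from the sample `Z 0, …, Z (N−1)`
of pairs `(Y_i, Y_i^u)`. -/
noncomputable def pfEstimator {Ω : Type*} (k N : ℕ)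
    (Z : ℕ → Ω → EuclideanSpace ℝ (Fin k) × EuclideanSpace ℝ (Fin k)) (ω : Ω) : ℝ :=
  (∑ l : Fin k, ((1 / N : ℝ) * ∑ i ∈ Finset.range N, (Z i ω).1 l * (Z i ω).2 l
      - ((1 / N : ℝ) * ∑ i ∈ Finset.range N, ((Z i ω).1 l + (Z i ω).2 l) / 2) ^ 2)) /
  (∑ l : Fin k, ((1 / N : ℝ) * ∑ i ∈ Finset.range N, (((Z i ω).1 l) ^ 2 + ((Z i ω).2 l) ^ 2) / 2
      - ((1 / N : ℝ) * ∑ i ∈ Finset.range N, ((Z i ω).1 l + (Z i ω).2 l) / 2) ^ 2))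

section Aux

variable {Ω : Type*} [MeasurableSpace Ω] {P : Measure Ω} [IsProbabilityMeasure P]

omit [IsProbabilityMeasure P] in
lemma integrable_mul_of_memL2 {f g : Ω → ℝ} (hf : MemLp f 2 P) (hg : MemLp g 2 P) :
    Integrable (fun ω => f ω * g ω) P := by
  have h1 := (hf.add hg).integrable_sq
  have h2 := hf.integrable_sq
  have h3 := hg.integrable_sq
  have : (fun ω => f ω * g ω) = fun ω => ((f ω + g ω) ^ 2 - f ω ^ 2 - g ω ^ 2) / 2 := by
    ext ω; ring
  rw [this]
  exact ((h1.sub h2).sub h3).div_const 2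

lemma rCov_eq {f g : Ω → ℝ} (hf : MemLp f 2 P) (hg : MemLp g 2 P) :
    rCov P f g = (∫ ω, f ω * g ω ∂P) - (∫ ω, f ω ∂P) * (∫ ω, g ω ∂P) := by
  set a := ∫ ω, f ω ∂P
  set b := ∫ ω, g ω ∂P
  have hfg := integrable_mul_of_memL2 hf hg
  have hf1 := hf.integrable one_le_two
  have hg1 := hg.integrable one_le_two
  have key : (fun ω => (f ω - a) * (g ω - b))
      = fun ω => (f ω * g ω - a * g ω) - (b * f ω - a * b) := by
    ext ω; ring
  have i1 : Integrable (fun ω => f ω * g ω - a * g ω) P := hfg.sub (hg1.const_mul a)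
  have i2 : Integrable (fun ω => b * f ω - a * b) P :=
    (hf1.const_mul b).sub (integrable_const _)
  have i3 : Integrable (fun ω => a * g ω) P := hg1.const_mul a
  have i4 : Integrable (fun ω => b * f ω) P := hf1.const_mul b
  unfold rCov
  rw [key, integral_sub i1 i2, integral_sub hfg i3, integral_sub i4 (integrable_const _),
    integral_const_mul, integral_const_mul, integral_const]
  simp only [measure_univ, ENNReal.toReal_one, smul_eq_mul, one_mul, probReal_univ, mul_one]
  ring

omit [IsProbabilityMeasure P] in
/-- Generic SLLN helper for functionals of an i.i.d. sequence. -/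
lemma slln_aux {E : Type*} [MeasurableSpace E]
    (Z : ℕ → Ω → E) (W : Ω → E)
    (hindep : iIndepFun Z P)
    (hidist : ∀ i, IdentDistrib (Z i) W P P)
    (F : E → ℝ) (hF : Measurable F) (hint : Integrable (fun ω => F (W ω)) P) :
    ∀ᵐ ω ∂P, Tendsto (fun N : ℕ => (1 / N : ℝ) * ∑ i ∈ Finset.range N, F (Z i ω)) atTop
      (nhds (∫ ω, F (W ω) ∂P)) := by
  have hid0 : ∀ i, IdentDistrib (fun ω => F (Z i ω)) (fun ω => F (W ω)) P P :=
    fun i => (hidist i).comp hF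
  have hint0 : Integrable (fun ω => F (Z 0 ω)) P := (hid0 0).integrable_iff.mpr hint
  have hindep' : Pairwise (Function.onFun (IndepFun · · P) fun i => fun ω => F (Z i ω)) :=
    fun i j hij => (hindep.indepFun hij).comp hF hF
  have hident' : ∀ i, IdentDistrib (fun ω => F (Z i ω)) (fun ω => F (Z 0 ω)) P P :=
    fun i => (hid0 i).trans (hid0 0).symm
  have h := strong_law_ae_real (fun i => fun ω => F (Z i ω)) hint0 hindep' hident'
  have hEq : P[fun ω => F (Z 0 ω)] = ∫ ω, F (W ω) ∂P := (hid0 0).integral_eq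
  filter_upwards [h] with ω hω
  rw [hEq] at hω
  have : (fun N : ℕ => (1 / N : ℝ) * ∑ i ∈ Finset.range N, F (Z i ω))
      = fun N : ℕ => (∑ i ∈ Finset.range N, F (Z i ω)) / N := by
    ext N; rw [one_div, inv_mul_eq_div]
  rw [this]
  exact hω

end Aux

/-- **Consistency of the Pick-and-Freeze estimator**: `S_{u,N} → S^u` almost surely. -/
theorem pfEstimator_consistency
    {Ω : Type*} [MeasurableSpace Ω] (P : Measure Ω) [IsProbabilityMeasure P]
    (k : ℕ) (hk : 1 ≤ k)
    (Y Yu : Ω → EuclideanSpace ℝ (Fin k))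
    (hident : IdentDistrib Yu Y P P)
    (hL2 : MemLp Y 2 P)
    (hvar : ∑ l : Fin k, rCov P (fun ω => Y ω l) (fun ω => Y ω l) ≠ 0)
    (Su : ℝ)
    (hSu : Su = (∑ l : Fin k, rCov P (fun ω => Y ω l) (fun ω => Yu ω l))
      / ∑ l : Fin k, rCov P (fun ω => Y ω l) (fun ω => Y ω l))
    (Z : ℕ → Ω → EuclideanSpace ℝ (Fin k) × EuclideanSpace ℝ (Fin k))
    (hmeas : ∀ i, Measurable (Z i))
    (hindep : iIndepFun Z P)
    (hidist : ∀ i, IdentDistrib (Z i) (fun ω => (Y ω, Yu ω)) P P) :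
    ∀ᵐ ω ∂P, Tendsto (fun N => pfEstimator k N Z ω) atTop (nhds Su) := by
  set W : Ω → EuclideanSpace ℝ (Fin k) × EuclideanSpace ℝ (Fin k) := fun ω => (Y ω, Yu ω) with hW
  -- coordinate measurability
  have hπ : ∀ l : Fin k, Measurable (fun x : EuclideanSpace ℝ (Fin k) => x l) :=
    fun l => (EuclideanSpace.proj (𝕜 := ℝ) l).measurable
  -- coordinate L² facts
  have hYu2 : MemLp Yu 2 P := hident.memLp_iff.mpr hL2
  have hY2l : ∀ l : Fin k, MemLp (fun ω => Y ω l) 2 P :=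
    fun l => (EuclideanSpace.proj (𝕜 := ℝ) l).comp_memLp' hL2
  have hYu2l : ∀ l : Fin k, MemLp (fun ω => Yu ω l) 2 P :=
    fun l => (EuclideanSpace.proj (𝕜 := ℝ) l).comp_memLp' hYu2
  have hYint : ∀ l : Fin k, Integrable (fun ω => Y ω l) P :=
    fun l => (hY2l l).integrable one_le_two
  have hYuint : ∀ l : Fin k, Integrable (fun ω => Yu ω l) P :=
    fun l => (hYu2l l).integrable one_le_two
  -- identical distribution of coordinates
  have hidl : ∀ l : Fin k, IdentDistrib (fun ω => Yu ω l) (fun ω => Y ω l) P P :=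
    fun l => hident.comp (hπ l)
  have hEYu : ∀ l : Fin k, (∫ ω, Yu ω l ∂P) = ∫ ω, Y ω l ∂P := fun l => (hidl l).integral_eq
  have hEYu2 : ∀ l : Fin k, (∫ ω, Yu ω l * Yu ω l ∂P) = ∫ ω, Y ω l * Y ω l ∂P :=
    fun l => ((hidl l).comp (measurable_id.mul measurable_id)).integral_eq
  -- the three functionals
  set F1 : Fin k → EuclideanSpace ℝ (Fin k) × EuclideanSpace ℝ (Fin k) → ℝ := fun l p => p.1 l * p.2 l with hF1
  set F2 : Fin k → EuclideanSpace ℝ (Fin k) × EuclideanSpace ℝ (Fin k) → ℝ := fun l p => (p.1 l + p.2 l) / 2 with hF2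
  set F3 : Fin k → EuclideanSpace ℝ (Fin k) × EuclideanSpace ℝ (Fin k) → ℝ := fun l p => ((p.1 l) ^ 2 + (p.2 l) ^ 2) / 2 with hF3
  have hF1m : ∀ l, Measurable (F1 l) := fun l =>
    ((hπ l).comp measurable_fst).mul ((hπ l).comp measurable_snd)
  have hF2m : ∀ l, Measurable (F2 l) := fun l =>
    (((hπ l).comp measurable_fst).add ((hπ l).comp measurable_snd)).div_const 2
  have hF3m : ∀ l, Measurable (F3 l) := fun l =>
    ((((hπ l).comp measurable_fst).pow_const 2).add
      (((hπ l).comp measurable_snd).pow_const 2)).div_const 2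
  have hi1 : ∀ l, Integrable (fun ω => F1 l (W ω)) P :=
    fun l => integrable_mul_of_memL2 (hY2l l) (hYu2l l)
  have hi2 : ∀ l, Integrable (fun ω => F2 l (W ω)) P :=
    fun l => ((hYint l).add (hYuint l)).div_const 2
  have hi3 : ∀ l, Integrable (fun ω => F3 l (W ω)) P :=
    fun l => ((hY2l l).integrable_sq.add (hYu2l l).integrable_sq).div_const 2
  -- limits
  set m : Fin k → ℝ := fun l => ∫ ω, Y ω l ∂P with hm
  have hL2lim : ∀ l, (∫ ω, F2 l (W ω) ∂P) = m l := by
    intro l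
    show (∫ ω, (Y ω l + Yu ω l) / 2 ∂P) = m l
    rw [integral_div, integral_add (hYint l) (hYuint l), hEYu]
    ring
  have hL3lim : ∀ l, (∫ ω, F3 l (W ω) ∂P) = ∫ ω, Y ω l * Y ω l ∂P := by
    intro l
    show (∫ ω, ((Y ω l) ^ 2 + (Yu ω l) ^ 2) / 2 ∂P) = _
    rw [integral_div, integral_add (hY2l l).integrable_sq (hYu2l l).integrable_sq]
    simp only [sq]
    rw [hEYu2]
    ring
  -- a.e. convergence statements
  have hA : ∀ᵐ ω ∂P, ∀ l : Fin k,
      Tendsto (fun N : ℕ => (1 / N : ℝ) * ∑ i ∈ Finset.range N, F1 l (Z i ω)) atTop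
        (nhds (∫ ω, F1 l (W ω) ∂P)) :=
    ae_all_iff.2 fun l => slln_aux Z W hindep hidist (F1 l) (hF1m l) (hi1 l)
  have hB : ∀ᵐ ω ∂P, ∀ l : Fin k,
      Tendsto (fun N : ℕ => (1 / N : ℝ) * ∑ i ∈ Finset.range N, F2 l (Z i ω)) atTop
        (nhds (∫ ω, F2 l (W ω) ∂P)) :=
    ae_all_iff.2 fun l => slln_aux Z W hindep hidist (F2 l) (hF2m l) (hi2 l)
  have hC : ∀ᵐ ω ∂P, ∀ l : Fin k,
      Tendsto (fun N : ℕ => (1 / N : ℝ) * ∑ i ∈ Finset.range N, F3 l (Z i ω)) atTop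
        (nhds (∫ ω, F3 l (W ω) ∂P)) :=
    ae_all_iff.2 fun l => slln_aux Z W hindep hidist (F3 l) (hF3m l) (hi3 l)
  -- identify the limit with Su
  have hrCovYY : ∀ l, rCov P (fun ω => Y ω l) (fun ω => Y ω l)
      = (∫ ω, Y ω l * Y ω l ∂P) - m l * m l := fun l => rCov_eq (hY2l l) (hY2l l)
  have hrCovYYu : ∀ l, rCov P (fun ω => Y ω l) (fun ω => Yu ω l)
      = (∫ ω, F1 l (W ω) ∂P) - m l * m l := by
    intro l
    rw [rCov_eq (hY2l l) (hYu2l l), hEYu]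
  have hden : (∑ l : Fin k, ((∫ ω, Y ω l * Y ω l ∂P) - m l * m l))
      = ∑ l : Fin k, rCov P (fun ω => Y ω l) (fun ω => Y ω l) :=
    Finset.sum_congr rfl fun l _ => (hrCovYY l).symm
  have hden0 : (∑ l : Fin k, ((∫ ω, Y ω l * Y ω l ∂P) - m l * m l)) ≠ 0 := by
    rw [hden]; exact hvar
  have hSu' : Su = (∑ l : Fin k, ((∫ ω, F1 l (W ω) ∂P) - m l * m l))
      / ∑ l : Fin k, ((∫ ω, Y ω l * Y ω l ∂P) - m l * m l) := by
    rw [hSu, hden]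
    congr 1
    exact Finset.sum_congr rfl fun l _ => hrCovYYu l
  filter_upwards [hA, hB, hC] with ω hAω hBω hCω
  rw [hSu']
  have hnum : Tendsto (fun N : ℕ => ∑ l : Fin k,
      ((1 / N : ℝ) * ∑ i ∈ Finset.range N, F1 l (Z i ω)
        - ((1 / N : ℝ) * ∑ i ∈ Finset.range N, F2 l (Z i ω)) ^ 2)) atTop
      (nhds (∑ l : Fin k, ((∫ ω, F1 l (W ω) ∂P) - m l * m l))) := by
    apply tendsto_finset_sum
    intro l _
    have h2 := (hBω l).pow 2
    rw [hL2lim l] at h2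
    have := (hAω l).sub h2
    simpa [sq] using this
  have hdent : Tendsto (fun N : ℕ => ∑ l : Fin k,
      ((1 / N : ℝ) * ∑ i ∈ Finset.range N, F3 l (Z i ω)
        - ((1 / N : ℝ) * ∑ i ∈ Finset.range N, F2 l (Z i ω)) ^ 2)) atTop
      (nhds (∑ l : Fin k, ((∫ ω, Y ω l * Y ω l ∂P) - m l * m l))) := by
    apply tendsto_finset_sum
    intro l _
    have h2 := (hBω l).pow 2
    rw [hL2lim l] at h2
    have h3 := hCω l
    rw [hL3lim l] at h3
    have := h3.sub h2
    simpa [sq] using this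
  have hfin := hnum.div hdent hden0
  have heq : (fun N => pfEstimator k N Z ω)
      = ((fun N : ℕ => ∑ l : Fin k,
          ((1 / N : ℝ) * ∑ i ∈ Finset.range N, F1 l (Z i ω)
            - ((1 / N : ℝ) * ∑ i ∈ Finset.range N, F2 l (Z i ω)) ^ 2)) /
        (fun N : ℕ => ∑ l : Fin k,
          ((1 / N : ℝ) * ∑ i ∈ Finset.range N, F3 l (Z i ω)
            - ((1 / N : ℝ) * ∑ i ∈ Finset.range N, F2 l (Z i ω)) ^ 2))) := rfl
  rw [heq]
  exact hfin
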